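/- There exist infinitely many positive integers n such that max{sfp(n), sfp(n+1), sfp(n+2)} < n^{1/3}, i.e., max{sfp(n), sfp(n+1), sfp(n+2)}³ < n. -/

import Mathlib

/-!
For `t ≥ 1` the three consecutive integers `(t - 1)(2t + 1)²`, `t(4t² - 3)`, `(t + 1)(2t - 1)²`
are about `4t³`, and the outer two have squarefree parts at most `t - 1` and `t + 1`.
To make the middle squarefree part small as well, note that for `t = 54i` the middle term is
`162i(48(9i)² - 1)`, which equals `46i(9k)²` whenever `48(9i)² - 23k² = 1`, and this Pell-type
equation has infinitely many solutions.
-/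

/-- The squarefree part of `n`: the smallest positive integer `a` such that
`a ∣ n` and `n / a` is a perfect square. -/
noncomputable def sfp (n : ℕ) : ℕ := sInf {a : ℕ | 0 < a ∧ a ∣ n ∧ ∃ m : ℕ, n = a * m ^ 2}

lemma sfp_le_of_eq_mul_sq {n a : ℕ} (m : ℕ) (ha : 0 < a) (h : n = a * m ^ 2) : sfp n ≤ a :=
  Nat.sInf_le ⟨ha, h ▸ dvd_mul_right a (m ^ 2), m, h⟩

lemma sub_one_mul_two_mul_add_one_sq_add_one {t : ℕ} (ht : 1 ≤ t) :
    (t - 1) * (2 * t + 1) ^ 2 + 1 = t * (4 * t ^ 2 - 3) := by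
  have h3 : 3 ≤ 4 * t ^ 2 := by nlinarith
  zify [ht, h3]
  ring

lemma sub_one_mul_two_mul_add_one_sq_add_two {t : ℕ} (ht : 1 ≤ t) :
    (t - 1) * (2 * t + 1) ^ 2 + 2 = (t + 1) * (2 * t - 1) ^ 2 := by
  have h1 : 1 ≤ 2 * t := by omega
  zify [ht, h1]
  ring

lemma add_one_pow_three_lt_sub_one_mul_two_mul_add_one_sq {t : ℕ} (ht : 3 ≤ t) :
    (t + 1) ^ 3 < (t - 1) * (2 * t + 1) ^ 2 := by
  zify [(by omega : 1 ≤ t)]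
  have ht' : (3 : ℤ) ≤ t := by exact_mod_cast ht
  nlinarith [mul_le_mul_of_nonneg_left ht' (by positivity : (0 : ℤ) ≤ (t : ℤ) ^ 2)]

/-- Starting from `48 · 9² = 23 · 13² + 1`, iterate the automorphism
`(j, k) ↦ (7775j + 5382k, 11232j + 7775k)` of `48j² - 23k²`, which keeps `9 ∣ j` since `5382 = 9 · 598`. -/
lemma exists_lt_pell_48_23_nine_mul (N : ℕ) : ∃ i k : ℕ, N < i ∧ 48 * (9 * i) ^ 2 = 23 * k ^ 2 + 1 := by
  induction N with
  | zero => exact ⟨1, 13, by norm_num, by norm_num⟩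
  | succ N ih =>
    obtain ⟨i, k, hNi, hpell⟩ := ih
    refine ⟨7775 * i + 598 * k, 11232 * (9 * i) + 7775 * k, by omega, ?_⟩
    zify at hpell ⊢
    linear_combination hpell

theorem stmt11 :
    ∀ N : ℕ, ∃ n : ℕ, N < n ∧
      (max (sfp n) (max (sfp (n + 1)) (sfp (n + 2)))) ^ 3 < n := by
  intro N
  obtain ⟨i, k, hNi, hpell⟩ := exists_lt_pell_48_23_nine_mul N
  set t := 54 * i with ht
  have ht3 : 3 ≤ t := by omega
  have hmid : t * (4 * t ^ 2 - 3) = 46 * i * (9 * k) ^ 2 := by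
    have h3 : 3 ≤ 4 * t ^ 2 := by nlinarith
    rw [ht] at h3 ⊢
    zify [h3] at hpell ⊢
    linear_combination 162 * (i : ℤ) * hpell
  have hsfp : max (sfp ((t - 1) * (2 * t + 1) ^ 2)) (max (sfp ((t - 1) * (2 * t + 1) ^ 2 + 1))
      (sfp ((t - 1) * (2 * t + 1) ^ 2 + 2))) ≤ t + 1 := by
    refine max_le ?_ (max_le ?_ ?_)
    · exact (sfp_le_of_eq_mul_sq _ (by omega) rfl).trans (by omega)
    · refine (sfp_le_of_eq_mul_sq (9 * k) (by omega) ?_).trans (show 46 * i ≤ t + 1 by omega)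
      rw [sub_one_mul_two_mul_add_one_sq_add_one (by omega), hmid]
    · exact sfp_le_of_eq_mul_sq _ (by omega) (sub_one_mul_two_mul_add_one_sq_add_two (by omega))
  have hbound := add_one_pow_three_lt_sub_one_mul_two_mul_add_one_sq ht3
  refine ⟨(t - 1) * (2 * t + 1) ^ 2, ?_, (Nat.pow_le_pow_left hsfp 3).trans_lt hbound⟩
  have : t - 1 ≤ (t - 1) * (2 * t + 1) ^ 2 := Nat.le_mul_of_pos_right _ (by positivity)
  omega
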